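/- arXiv:2205.11312 — 2 statements merged into one kernel-verified Lean document; each statement's English description precedes it below -/
import Mathlib

section
/- Let D be an integral domain with quotient field K, let T be a flat overring of D, and let f ∈ K[X]. Then f ∈ Int(T) if and only if (T :_T f(D)T) = T, where (T :_T f(D)T) := {t ∈ T : t·f(d) ∈ T for all d ∈ D}. -/
open Polynomial

section Preliminaries

variable {K : Type*} [Field K]


/-- The ring `Int(D)` of integer-valued polynomials on a subring `D` of `K`. -/
def intPoly (D : Subring K) : Subring (Polynomial K) where
  carrier := {f : Polynomial K | ∀ d ∈ D, f.eval d ∈ D}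
  mul_mem' := fun {f g} hf hg d hd => by
    simpa [Polynomial.eval_mul] using mul_mem (hf d hd) (hg d hd)
  one_mem' := fun d hd => by simpa using one_mem D
  add_mem' := fun {f g} hf hg d hd => by
    simpa [Polynomial.eval_add] using add_mem (hf d hd) (hg d hd)
  zero_mem' := fun d hd => by simpa using zero_mem D
  neg_mem' := fun {f} hf d hd => by
    simpa [Polynomial.eval_neg] using neg_mem (hf d hd)

@[simp] lemma mem_intPoly {D : Subring K} {f : Polynomial K} :
    f ∈ intPoly D ↔ ∀ d ∈ D, f.eval d ∈ D := Iff.rfl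

lemma smul_poly_eq_C_mul (T : Subring K) (t : ↥T) (p : Polynomial K) :
    t • p = Polynomial.C (t : K) * p := by
  rw [Subring.smul_def, Polynomial.smul_eq_C_mul]

/-- `Int(D)T` : the `T`-submodule of `K[X]` generated by `Int(D)`, which is a subring. -/
def intMul (D T : Subring K) : Subring (Polynomial K) where
  carrier := (Submodule.span ↥T ((intPoly D : Set (Polynomial K))) : Set (Polynomial K))
  zero_mem' := Submodule.zero_mem _
  add_mem' := fun h1 h2 => Submodule.add_mem _ h1 h2
  neg_mem' := fun h => Submodule.neg_mem _ h
  one_mem' := Submodule.subset_span (one_mem (intPoly D))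
  mul_mem' := by
    intro p q hp hq
    simp only [SetLike.mem_coe] at *
    induction hp using Submodule.span_induction with
    | mem x hx =>
      induction hq using Submodule.span_induction with
      | mem y hy => exact Submodule.subset_span (mul_mem hx hy)
      | zero => simpa using Submodule.zero_mem _
      | add y z _ _ hy hz => rw [mul_add]; exact Submodule.add_mem _ hy hz
      | smul t y _ hy =>
        rw [smul_poly_eq_C_mul, ← mul_assoc, mul_comm x (Polynomial.C (t:K)), mul_assoc,
          ← smul_poly_eq_C_mul]
        exact Submodule.smul_mem _ t hy
    | zero => simpa using Submodule.zero_mem _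
    | add y z _ _ hy hz => rw [add_mul]; exact Submodule.add_mem _ hy hz
    | smul t y _ hy =>
      rw [smul_poly_eq_C_mul, mul_assoc, ← smul_poly_eq_C_mul]
      exact Submodule.smul_mem _ t hy

lemma mem_intMul {D T : Subring K} {f : Polynomial K} :
    f ∈ intMul D T ↔ f ∈ Submodule.span ↥T ((intPoly D : Set (Polynomial K))) := Iff.rfl

lemma intPoly_le_intMul (D T : Subring K) : intPoly D ≤ intMul D T :=
  fun _ hf => Submodule.subset_span hf



/-- The localization `D_M` of `D` at a prime ideal `M`, as a subring of `K` (an overring). -/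
def locAt (D : Subring K) (M : Ideal ↥D) [hM : M.IsPrime] : Subring K where
  carrier := {x : K | ∃ d s : ↥D, s ∉ M ∧ (s : K) * x = (d : K)}
  zero_mem' := ⟨0, 1, (Ideal.ne_top_iff_one M).mp hM.ne_top, by simp⟩
  one_mem' := ⟨1, 1, (Ideal.ne_top_iff_one M).mp hM.ne_top, by simp⟩
  add_mem' := by
    rintro x y ⟨d, s, hs, hsx⟩ ⟨e, t, ht, hty⟩
    refine ⟨d * t + e * s, s * t, fun h => ?_, ?_⟩
    · rcases hM.mem_or_mem h with h | h
      exacts [hs h, ht h]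
    · push_cast
      calc (s:K) * (t:K) * (x + y) = (t:K) * ((s:K) * x) + (s:K) * ((t:K) * y) := by ring
      _ = (d:K) * (t:K) + (e:K) * (s:K) := by rw [hsx, hty]; ring
  neg_mem' := by
    rintro x ⟨d, s, hs, hsx⟩
    exact ⟨-d, s, hs, by push_cast; rw [mul_neg, hsx]⟩
  mul_mem' := by
    rintro x y ⟨d, s, hs, hsx⟩ ⟨e, t, ht, hty⟩
    refine ⟨d * e, s * t, fun h => ?_, ?_⟩
    · rcases hM.mem_or_mem h with h | h
      exacts [hs h, ht h]
    · push_cast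
      calc (s:K) * (t:K) * (x * y) = ((s:K)*x) * ((t:K)*y) := by ring
      _ = (d:K) * (e:K) := by rw [hsx, hty]

lemma le_locAt (D : Subring K) (M : Ideal ↥D) [hM : M.IsPrime] : D ≤ locAt D M := by
  intro x hx
  exact ⟨⟨x, hx⟩, 1, (Ideal.ne_top_iff_one M).mp hM.ne_top, by simp⟩

/-- The conductor ideal `(D :_D f(D))` of an integer-valued-polynomial candidate. -/
def condIdeal (D : Subring K) (f : Polynomial K) : Ideal ↥D where
  carrier := {d : ↥D | ∀ c ∈ D, (d : K) * f.eval c ∈ D}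
  zero_mem' := fun c _ => by simpa using zero_mem D
  add_mem' := fun {a b} ha hb c hc => by
    have := add_mem (ha c hc) (hb c hc)
    simpa [add_mul] using this
  smul_mem' := fun r d hd c hc => by
    have := mul_mem r.2 (hd c hc)
    simpa [mul_assoc] using this

/-- The conductor `(T :_T f(D)T)`. -/
def condIdealT (D T : Subring K) (f : Polynomial K) : Ideal ↥T where
  carrier := {t : ↥T | ∀ c ∈ D, (t : K) * f.eval c ∈ T}
  zero_mem' := fun c _ => by simpa using zero_mem T
  add_mem' := fun {a b} ha hb c hc => by
    have := add_mem (ha c hc) (hb c hc)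
    simpa [add_mul] using this
  smul_mem' := fun r t ht c hc => by
    have := mul_mem r.2 (ht c hc)
    simpa [mul_assoc] using this

end Preliminaries

section CG

variable {A B : Type*} [CommRing A] [IsDomain A] [CommRing B] [IsDomain B]

lemma nonZeroDivisors_le_comap_of_injective (f : A →+* B) (hf : Function.Injective f) :
    nonZeroDivisors A ≤ Submonoid.comap f (nonZeroDivisors B) := by
  intro a ha
  simp only [Submonoid.mem_comap]
  refine mem_nonZeroDivisors_of_ne_zero fun h => ?_
  exact nonZeroDivisors.ne_zero ha (hf (by simpa using h))

/-- Extension of fractional ideals along an injective ring homomorphism of domains,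
as a monoid homomorphism. -/
noncomputable def extFrac (f : A →+* B) (hf : Function.Injective f) :
    FractionalIdeal (nonZeroDivisors A) (FractionRing A) →*
      FractionalIdeal (nonZeroDivisors B) (FractionRing B) where
  toFun I := I.extended (FractionRing B) (nonZeroDivisors_le_comap_of_injective f hf)
  map_one' := FractionalIdeal.extended_one _ _
  map_mul' I J := FractionalIdeal.extended_mul _ _ _ _

lemma extFrac_spanSingleton (f : A →+* B) (hf : Function.Injective f) (x : FractionRing A) :
    extFrac f hf (FractionalIdeal.spanSingleton _ x) =
      FractionalIdeal.spanSingleton _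
        (IsLocalization.map (FractionRing B) f
          (nonZeroDivisors_le_comap_of_injective f hf) x) := by
  set g := IsLocalization.map (S := FractionRing A) (FractionRing B) f
    (nonZeroDivisors_le_comap_of_injective f hf) with hg
  apply FractionalIdeal.coeToSubmodule_injective
  show ((FractionalIdeal.spanSingleton (nonZeroDivisors A) x).extended (FractionRing B)
      (nonZeroDivisors_le_comap_of_injective f hf) : Submodule B (FractionRing B)) =
    ((FractionalIdeal.spanSingleton (nonZeroDivisors B) (g x)) : Submodule B (FractionRing B))
  rw [FractionalIdeal.coe_extended_eq_span, FractionalIdeal.coe_spanSingleton]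
  apply le_antisymm
  · rw [Submodule.span_le]
    rintro _ ⟨z, hz, rfl⟩
    rw [SetLike.mem_coe, FractionalIdeal.mem_spanSingleton] at hz
    obtain ⟨a, rfl⟩ := hz
    rw [SetLike.mem_coe, Submodule.mem_span_singleton]
    refine ⟨f a, ?_⟩
    rw [Algebra.smul_def a x, map_mul, IsLocalization.map_eq, Algebra.smul_def]
  · refine Submodule.span_le.mpr (Set.singleton_subset_iff.mpr (Submodule.subset_span ?_))
    exact ⟨x, SetLike.mem_coe.mpr (FractionalIdeal.mem_spanSingleton_self _ x), rfl⟩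

/-- The extension map between class groups induced by an injective ring homomorphism of
integral domains. -/
noncomputable def mapCG (f : A →+* B) (hf : Function.Injective f) :
    ClassGroup A →* ClassGroup B := by
  refine QuotientGroup.lift _ ((ClassGroup.mk (FractionRing B)).comp (Units.map (extFrac f hf))) ?_
  intro x hx
  obtain ⟨u, rfl⟩ := hx
  rw [MonoidHom.mem_ker, MonoidHom.comp_apply, ClassGroup.mk_eq_one_iff]
  have h1 : ((Units.map (extFrac f hf : _ →* _)
        (toPrincipalIdeal A (FractionRing A) u) :
      (FractionalIdeal (nonZeroDivisors B) (FractionRing B))ˣ) :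
      FractionalIdeal (nonZeroDivisors B) (FractionRing B)) =
      extFrac f hf (toPrincipalIdeal A (FractionRing A) u) := rfl
  rw [h1, coe_toPrincipalIdeal, extFrac_spanSingleton]
  rw [FractionalIdeal.coe_spanSingleton]
  exact ⟨⟨_, rfl⟩⟩

end CG

section Homs

variable {K : Type*} [Field K]

lemma subringInclusion_injective {R : Type*} [Ring R] {A B : Subring R} (h : A ≤ B) :
    Function.Injective (Subring.inclusion h) := by
  intro a b hab
  have h2 := congrArg (Subtype.val : ↥B → R) hab
  exact Subtype.ext h2

/-- The constants map `D → Int(D)`. -/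
noncomputable def constHom (D : Subring K) : ↥D →+* ↥(intPoly D) where
  toFun d := ⟨Polynomial.C (d : K), fun c hc => by simpa using d.2⟩
  map_one' := Subtype.ext (by push_cast; simp)
  map_mul' a b := Subtype.ext (by push_cast; simp)
  map_zero' := Subtype.ext (by push_cast; simp)
  map_add' a b := Subtype.ext (by push_cast; simp)

lemma constHom_injective (D : Subring K) : Function.Injective (constHom D) := by
  intro a b hab
  have h2 := congrArg (Subtype.val : {p : Polynomial K // p ∈ _} → Polynomial K) hab
  exact Subtype.ext (Polynomial.C_injective h2)

lemma C_mem_intMul (D T : Subring K) (t : ↥T) : Polynomial.C (t : K) ∈ intMul D T := by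
  have h1 := Submodule.smul_mem (Submodule.span ↥T ((intPoly D : Set (Polynomial K)))) t
    (Submodule.subset_span (one_mem (intPoly D)))
  rwa [smul_poly_eq_C_mul, mul_one] at h1

/-- The constants map `T → Int(D)T`. -/
noncomputable def constHomMul (D T : Subring K) : ↥T →+* ↥(intMul D T) where
  toFun t := ⟨Polynomial.C (t : K), C_mem_intMul D T t⟩
  map_one' := Subtype.ext (by push_cast; simp)
  map_mul' a b := Subtype.ext (by push_cast; simp)
  map_zero' := Subtype.ext (by push_cast; simp)
  map_add' a b := Subtype.ext (by push_cast; simp)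

lemma constHomMul_injective (D T : Subring K) : Function.Injective (constHomMul D T) := by
  intro a b hab
  have h2 := congrArg (Subtype.val : ↥(intMul D T) → Polynomial K) hab
  exact Subtype.ext (Polynomial.C_injective h2)

/-- The extension map `Pic(D) → Pic(T)` for an overring `T` of `D`. -/
noncomputable def picExt {D T : Subring K} (h : D ≤ T) : ClassGroup ↥D →* ClassGroup ↥T :=
  mapCG (Subring.inclusion h) (subringInclusion_injective h)

/-- The extension map `ι_D : Pic(D) → Pic(Int(D))`. -/
noncomputable def iotaPic (D : Subring K) : ClassGroup ↥D →* ClassGroup ↥(intPoly D) :=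
  mapCG (constHom D) (constHom_injective D)

/-- The extension map `ι_{D,T} : Pic(T) → Pic(Int(D)T)`. -/
noncomputable def iotaPicMul (D T : Subring K) : ClassGroup ↥T →* ClassGroup ↥(intMul D T) :=
  mapCG (constHomMul D T) (constHomMul_injective D T)

/-- The extension map `Pic(Int(D)) → Pic(Int(D)T)`. -/
noncomputable def picIntExt (D T : Subring K) :
    ClassGroup ↥(intPoly D) →* ClassGroup ↥(intMul D T) :=
  mapCG (Subring.inclusion (intPoly_le_intMul D T))
    (subringInclusion_injective (intPoly_le_intMul D T))

/-- Transport of class groups along an equality of subrings. -/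
noncomputable def cgCongr {R : Type*} [CommRing R] [IsDomain R] {A B : Subring R} (h : A = B) :
    ClassGroup ↥A →* ClassGroup ↥B :=
  mapCG (RingEquiv.subringCongr h).toRingHom (RingEquiv.subringCongr h).injective

/-- The int-polynomial Picard group `Picpol(D) = Pic(Int(D))/ι_D(Pic(D))`. -/
noncomputable def picpol (D : Subring K) : Type _ :=
  ClassGroup ↥(intPoly D) ⧸ (iotaPic D).range

noncomputable instance (D : Subring K) : CommGroup (picpol D) :=
  QuotientGroup.Quotient.commGroup _

/-- The quotient map `Pic(Int(D)) → Picpol(D)`. -/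
noncomputable def picpolMk (D : Subring K) : ClassGroup ↥(intPoly D) →* picpol D :=
  QuotientGroup.mk' _

/-- The relative int-polynomial Picard group `Picpol(D,T) = Pic(Int(D)T)/ι_{D,T}(Pic(T))`. -/
noncomputable def picpolRel (D T : Subring K) : Type _ :=
  ClassGroup ↥(intMul D T) ⧸ (iotaPicMul D T).range

noncomputable instance (D T : Subring K) : CommGroup (picpolRel D T) :=
  QuotientGroup.Quotient.commGroup _

/-- The quotient map `Pic(Int(D)T) → Picpol(D,T)`. -/
noncomputable def picpolRelMk (D T : Subring K) :
    ClassGroup ↥(intMul D T) →* picpolRel D T :=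
  QuotientGroup.mk' _

/-- `Pic(D,Θ)`: classes of `Pic(D)` that become trivial in every `T ∈ Θ`. -/
noncomputable def picRel (D : Subring K) (Θ : Set (Subring K)) (hle : ∀ T ∈ Θ, D ≤ T) :
    Subgroup (ClassGroup ↥D) where
  carrier := {c | ∀ T, ∀ hT : T ∈ Θ, picExt (hle T hT) c = 1}
  one_mem' := fun T hT => map_one _
  mul_mem' := fun {a b} ha hb T hT => by rw [map_mul, ha T hT, hb T hT, mul_one]
  inv_mem' := fun {a} ha T hT => by rw [map_inv, ha T hT, inv_one]

/-- The subgroup of a product of groups consisting of finitely supported elements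
(the direct sum inside the direct product). -/
def finSupportSubgroup {ι : Type*} (G : ι → Type*) [∀ i, CommGroup (G i)] :
    Subgroup (Π i, G i) where
  carrier := {x | {i | x i ≠ 1}.Finite}
  one_mem' := by simp
  mul_mem' := fun {a b} ha hb => Set.Finite.subset (ha.union hb) (fun i hi => by
    by_contra h
    simp only [Set.mem_union, Set.mem_setOf_eq, not_or, not_not] at h
    exact hi (by simp [h.1, h.2]))
  inv_mem' := fun {a} ha => Set.Finite.subset ha (fun i hi => by
    simp only [Set.mem_setOf_eq, Pi.inv_apply, ne_eq, inv_eq_one] at hi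
    exact hi)

end Homs


/-- `B` is flat as an `A`-module, the module structure being induced by the
inclusion `A ≤ B` of subrings. -/
def SubringFlat {R : Type*} [CommRing R] (A B : Subring R) (h : A ≤ B) : Prop :=
  @Module.Flat ↥A ↥B _ _ (@Algebra.toModule _ _ _ _ ((Subring.inclusion h).toAlgebra))

section Families

variable {K : Type*} [Field K]

/-- A Jaffard family of the integral domain `D`. -/
structure IsJaffardFamily (D : Subring K) (Θ : Set (Subring K)) : Prop where
  le : ∀ T ∈ Θ, D ≤ T
  top : Θ = {(⊤ : Subring K)} ∨ (⊤ : Subring K) ∉ Θ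
  flat : ∀ T, ∀ hT : T ∈ Θ, SubringFlat D T (le T hT)
  complete : ∀ I : Ideal ↥D, ∀ x : ↥D,
    x ∈ I ↔ ∀ T ∈ Θ, (x : K) ∈ Submodule.span ↥T ((fun d : ↥D => (d : K)) '' (I : Set ↥D))
  independent : ∀ T ∈ Θ, ∀ T' ∈ Θ, T ≠ T' → T ⊔ T' = ⊤
  locallyFinite : ∀ x : K, x ∈ D → x ≠ 0 → {T ∈ Θ | ¬ ∃ y ∈ T, x * y = 1}.Finite

/-- A t-Jaffard family of the integral domain `D`. -/
structure IsTJaffardFamily (D : Subring K) (Θ : Set (Subring K)) : Prop where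
  le : ∀ T ∈ Θ, D ≤ T
  top : Θ = {(⊤ : Subring K)} ∨ (⊤ : Subring K) ∉ Θ
  flat : ∀ T, ∀ hT : T ∈ Θ, SubringFlat D T (le T hT)
  independent : ∀ T ∈ Θ, ∀ T' ∈ Θ, T ≠ T' → T ⊔ T' = ⊤
  locallyFinite : ∀ x : K, x ∈ D → x ≠ 0 → {T ∈ Θ | ¬ ∃ y ∈ T, x * y = 1}.Finite
  inter : ∀ x : K, x ∈ D ↔ ∀ T ∈ Θ, x ∈ T

/-- The Zariski topology on the space of subrings of `K`, whose subbasic open sets are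
`B(x) = {T ∣ x ∈ T}`. -/
def zariskiTopOverrings (K : Type*) [Field K] : TopologicalSpace (Subring K) :=
  TopologicalSpace.generateFrom {U | ∃ x : K, U = {T : Subring K | x ∈ T}}

/-- A pre-Jaffard family of the integral domain `D`. -/
structure IsPreJaffardFamily (D : Subring K) (Θ : Set (Subring K)) : Prop where
  le : ∀ T ∈ Θ, D ≤ T
  top : Θ = {(⊤ : Subring K)} ∨ (⊤ : Subring K) ∉ Θ
  flat : ∀ T, ∀ hT : T ∈ Θ, SubringFlat D T (le T hT)
  complete : ∀ I : Ideal ↥D, ∀ x : ↥D,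
    x ∈ I ↔ ∀ T ∈ Θ, (x : K) ∈ Submodule.span ↥T ((fun d : ↥D => (d : K)) '' (I : Set ↥D))
  independent : ∀ T ∈ Θ, ∀ T' ∈ Θ, T ≠ T' → T ⊔ T' = ⊤
  compact : @IsCompact (Subring K) (zariskiTopOverrings K) Θ

/-- A Jaffard overring: a member of some Jaffard family of `D`. -/
def IsJaffardOverring (D T : Subring K) : Prop :=
  ∃ Θ : Set (Subring K), IsJaffardFamily D Θ ∧ T ∈ Θ

/-- A t-Jaffard overring: a member of some t-Jaffard family of `D`. -/
def IsTJaffardOverring (D T : Subring K) : Prop :=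
  ∃ Θ : Set (Subring K), IsTJaffardFamily D Θ ∧ T ∈ Θ

/-- A weak Jaffard family pointed at `Tinf`: a pre-Jaffard family whose set of members
that are not Jaffard overrings of `D` is exactly `{Tinf}`. -/
def IsWeakJaffardFamily (D : Subring K) (Θ : Set (Subring K)) (Tinf : Subring K) : Prop :=
  IsPreJaffardFamily D Θ ∧ {T ∈ Θ | ¬ IsJaffardOverring D T} = {Tinf}

end Families

section IntegerValued

variable {K : Type*} [Field K]

/-- The conductor `(A :_A x)`. -/
def colonIdeal (A : Subring K) (x : K) : Ideal ↥A where
  carrier := {a : ↥A | (a : K) * x ∈ A}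
  zero_mem' := by simp
  add_mem' := fun {a b} ha hb => by simpa [add_mul] using add_mem ha hb
  smul_mem' := fun r a ha => by simpa [mul_assoc] using mul_mem r.2 ha

lemma mem_colonIdeal {A : Subring K} {x : K} {a : ↥A} :
    a ∈ colonIdeal A x ↔ (a : K) * x ∈ A := Iff.rfl

lemma colonIdeal_eq_top_iff {A : Subring K} {x : K} : colonIdeal A x = ⊤ ↔ x ∈ A := by
  rw [Ideal.eq_top_iff_one, mem_colonIdeal, OneMemClass.coe_one, one_mul]

lemma condIdealT_eq_top_iff {D T : Subring K} {f : K[X]} :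
    condIdealT D T f = ⊤ ↔ ∀ d ∈ D, f.eval d ∈ T := by
  simp only [Ideal.eq_top_iff_one]
  exact forall₂_congr fun d _ => by rw [OneMemClass.coe_one, one_mul]

lemma natDegree_comp_C_mul_X_sub_le {p : K[X]} {n : ℕ} (hp : p.natDegree ≤ n + 1) (s : K) :
    (p.comp (C s * X) - C (s ^ (n + 1)) * p).natDegree ≤ n := by
  rw [natDegree_le_iff_coeff_eq_zero]
  intro m hm
  rw [coeff_sub, comp_C_mul_X_coeff, coeff_C_mul]
  rcases Nat.lt_or_ge (n + 1) m with hlt | hle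
  · rw [coeff_eq_zero_of_natDegree_lt (hp.trans_lt hlt)]
    ring
  · obtain rfl : m = n + 1 := by omega
    ring

theorem exists_pow_mul_eval_inv_mem {D : Subring K} (M : Submodule ↥D K) {p : K[X]}
    (hp : ∀ d ∈ D, p.eval d ∈ M) {s : K} (hs : s ∈ D) :
    ∃ e : ℕ, s ^ e * p.eval s⁻¹ ∈ M := by
  obtain rfl | hs0 := eq_or_ne s 0
  · exact ⟨1, by simp⟩
  have hmul : ∀ d ∈ D, ∀ x ∈ M, d * x ∈ M := fun d hd x hx => M.smul_mem ⟨d, hd⟩ hx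
  suffices ∀ n (p : K[X]), p.natDegree ≤ n → (∀ d ∈ D, p.eval d ∈ M) →
      ∃ e : ℕ, s ^ e * p.eval s⁻¹ ∈ M from this _ p le_rfl hp
  intro n
  induction n with
  | zero =>
    intro p hdeg hp
    refine ⟨0, ?_⟩
    rw [eq_C_of_natDegree_le_zero hdeg]
    simpa [coeff_zero_eq_eval_zero] using hp 0 D.zero_mem
  | succ n ih =>
    intro p hdeg hp
    -- `q` has smaller degree, takes values in `M` on `D`, and `q(1/s) = p(1) - s^(n+1) p(1/s)`.
    set q := p.comp (C s * X) - C (s ^ (n + 1)) * p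
    have hq : ∀ d ∈ D, q.eval d ∈ M := fun d hd => by
      simpa [q] using sub_mem (hp _ (mul_mem hs hd)) (hmul _ (pow_mem hs _) _ (hp d hd))
    obtain ⟨e, he⟩ := ih q (natDegree_comp_C_mul_X_sub_le hdeg s) hq
    refine ⟨e + (n + 1), ?_⟩
    have hsplit : s ^ (e + (n + 1)) * p.eval s⁻¹ = s ^ e * p.eval 1 - s ^ e * q.eval s⁻¹ := by
      simp only [q, eval_sub, eval_mul, eval_comp, eval_C, eval_X, mul_inv_cancel₀ hs0]
      ring
    rw [hsplit]
    exact sub_mem (hmul _ (pow_mem hs e) _ (hp 1 D.one_mem)) he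

lemma exists_pow_mul_eval_mem {D T : Subring K} (hDT : D ≤ T) {f : K[X]}
    (hfD : ∀ d ∈ D, f.eval d ∈ T) {t s : K} (hs : s ∈ D) (hst : s * t ∈ D) :
    ∃ e : ℕ, s ^ e * f.eval t ∈ T := by
  obtain rfl | hs0 := eq_or_ne s 0
  · exact ⟨1, by simp⟩
  let M : Submodule ↥D K :=
    { carrier := T
      add_mem' := add_mem
      zero_mem' := zero_mem T
      smul_mem' := fun c _ hx => mul_mem (hDT c.2) hx }
  -- `f(t) = p(1/s)` for the dilation `p(X) = f(X st)`, which maps `D` into `f(D)`.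
  obtain ⟨e, he⟩ := exists_pow_mul_eval_inv_mem M (p := f.comp (X * C (s * t)))
    (fun d hd => show _ ∈ T by simpa using hfD _ (mul_mem hd hst)) hs
  have he' : s ^ e * (f.comp (X * C (s * t))).eval s⁻¹ ∈ T := he
  exact ⟨e, by simpa [inv_mul_cancel_left₀ hs0] using he'⟩

lemma colonIdeal_map_eq_top_of_flat (D : Subring K) [IsFractionRing ↥D K] {T : Subring K}
    {hDT : D ≤ T} (hflat : SubringFlat D T hDT) (t : ↥T) :
    (colonIdeal D t).map (Subring.inclusion hDT) = ⊤ := by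
  let _ : Algebra ↥D ↥T := (Subring.inclusion hDT).toAlgebra
  obtain ⟨a, b, hb, hab⟩ := IsFractionRing.div_surjective (A := ↥D) (t : K)
  have hb0 : (b : K) ≠ 0 := fun h => nonZeroDivisors.ne_zero hb (Subtype.ext h)
  have hbt : (b : K) * t = a := by
    rw [← hab]
    exact mul_div_cancel₀ _ hb0
  have hrel : ∑ i, ![b, -a] i • ![t, 1] i = 0 := by
    apply Subtype.ext
    simp only [Fin.sum_univ_two, Algebra.smul_def]
    change (b : K) * t + -(a : K) * 1 = 0
    linear_combination hbt
  -- The equational criterion for flatness trivialises the relation `b • t - a • 1 = 0`.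
  obtain ⟨k, A, y, hy, hA⟩ :=
    @Module.Flat.isTrivialRelation_of_sum_smul_eq_zero ↥D ↥T _ _ _ hflat _ _ _ _ hrel
  have hcolon : ∀ j, A 1 j ∈ colonIdeal D t := fun j => by
    have hAj : (b : K) * A 0 j - a * A 1 j = 0 := by
      simpa [Fin.sum_univ_two, sub_eq_add_neg] using congrArg Subtype.val (hA j)
    have hA1 : (A 1 j : K) * t = A 0 j :=
      mul_left_cancel₀ hb0 (by linear_combination (A 1 j : K) * hbt - hAj)
    rw [mem_colonIdeal, hA1]
    exact (A 0 j).2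
  rw [Ideal.eq_top_iff_one, show (1 : ↥T) = ∑ j, A 1 j • y j from hy 1]
  refine Ideal.sum_mem _ fun j _ => ?_
  rw [Algebra.smul_def]
  exact Ideal.mul_mem_right _ _ (Ideal.mem_map_of_mem _ (hcolon j))

end IntegerValued

/-- Let `D` be an integral domain with quotient field `K`, let `T` be a flat
overring of `D`, and let `f ∈ K[X]`. Then `f ∈ Int(T)` if and only if `(T :_T f(D)T) = T`,
where `(T :_T f(D)T) = {t ∈ T : t·f(d) ∈ T for all d ∈ D}`. -/
theorem statement2 {K : Type*} [Field K] (D : Subring K) [IsFractionRing ↥D K]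
    (T : Subring K) (hDT : D ≤ T) (hflat : SubringFlat D T hDT) (f : Polynomial K) :
    f ∈ intPoly T ↔ condIdealT D T f = ⊤ := by
  rw [condIdealT_eq_top_iff]
  refine ⟨fun hf d hd => hf d (hDT hd), fun hfD t ht => ?_⟩
  -- Every `s ∈ (D :_D t)` has a power in `(T :_T f(t))`, and `(D :_D t)T = T` by flatness.
  rw [← colonIdeal_eq_top_iff, ← Ideal.radical_eq_top, eq_top_iff,
    ← colonIdeal_map_eq_top_of_flat D hflat ⟨t, ht⟩, Ideal.map_le_iff_le_comap]
  intro s hs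
  obtain ⟨e, he⟩ := exists_pow_mul_eval_mem hDT hfD s.2 hs
  exact ⟨e, by rwa [mem_colonIdeal, SubmonoidClass.coe_pow]⟩
end

section
/- Let D be an integral domain with quotient field K and let T be a flat overring of D. Then Int(D)T = Int(T) if and only if, for every f ∈ K[X], (D :_D f(D))T = (T :_T f(D)T), where (D :_D f(D)) := {d ∈ D : d·f(c) ∈ D for all c ∈ D}, (D :_D f(D))T denotes its extension to T, and (T :_T f(D)T) := {t ∈ T : t·f(d) ∈ T for all d ∈ D}. -/
open Polynomial

/-
For a flat overring `T` of `D` every `x ∈ T` satisfies `(D :_D x)T = T` (Richman). Two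
consequences drive the proof. First, a polynomial mapping `D` into `T` maps `T` into `T`: by
induction on the degree, `(D :_D x)T` lies in the radical of `(T :_T g(x))`. Second, every
`h ∈ Int(D)T` has `(D :_D h(D))T = T`, since these ideals multiply along sums and `T`-multiples.
Now if `Int(D)T = Int(T)` and `t f(D) ⊆ T`, then `t f ∈ Int(D)T`, and
`(D :_D t)·(D :_D t f(D))` is an ideal extending to `T` whose product with `t` lies in
`(D :_D f(D))`; conversely, if `1 ∈ (T :_T f(D)T) = (D :_D f(D))T` then `f` is a `T`-combination
of the integer-valued polynomials `d f`, `d ∈ (D :_D f(D))`.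
-/

lemma natDegree_comp_C_mul_X_sub_le_s3 {R : Type*} [CommRing R] {g : R[X]} {m : ℕ}
    (hg : g.natDegree ≤ m + 1) (r : R) :
    (g.comp (C r * X) - C (r ^ (m + 1)) * g).natDegree ≤ m := by
  rw [natDegree_le_iff_coeff_eq_zero]
  intro N hN
  rw [coeff_sub, comp_C_mul_X_coeff, coeff_C_mul]
  rcases (Nat.add_one_le_of_lt hN).eq_or_lt with rfl | hlt
  · ring
  · rw [coeff_eq_zero_of_natDegree_lt (hg.trans_lt hlt)]
    ring

section IntegerValued

variable {K : Type*} [Field K] {D : Subring K}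

lemma mem_condIdeal {f : K[X]} {d : ↥D} :
    d ∈ condIdeal D f ↔ ∀ c ∈ D, (d : K) * f.eval c ∈ D := Iff.rfl

lemma mem_condIdeal_C {x : K} {d : ↥D} :
    d ∈ condIdeal D (C x) ↔ (d : K) * x ∈ D := by
  simp only [mem_condIdeal, eval_C]
  exact ⟨fun h => h 0 D.zero_mem, fun h _ _ => h⟩

lemma condIdeal_eq_top_of_mem_intPoly {f : K[X]} (hf : f ∈ intPoly D) : condIdeal D f = ⊤ :=
  (Ideal.eq_top_iff_one _).mpr fun c hc => by simpa using hf c hc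

lemma condIdeal_mul_le_condIdeal_add (f g : K[X]) :
    condIdeal D f * condIdeal D g ≤ condIdeal D (f + g) := by
  refine Ideal.mul_le.mpr fun r hr s hs c hc => ?_
  have : ((r * s : ↥D) : K) * (f + g).eval c = s * (r * f.eval c) + r * (s * g.eval c) := by
    push_cast
    rw [eval_add]
    ring
  rw [this]
  exact D.add_mem (D.mul_mem s.2 (hr c hc)) (D.mul_mem r.2 (hs c hc))

lemma condIdeal_C_mul_le_condIdeal_C_mul (x : K) (f : K[X]) :
    condIdeal D (C x) * condIdeal D f ≤ condIdeal D (C x * f) := by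
  refine Ideal.mul_le.mpr fun r hr s hs c hc => ?_
  rw [mem_condIdeal_C] at hr
  have : ((r * s : ↥D) : K) * (C x * f).eval c = (r * x) * (s * f.eval c) := by
    push_cast
    rw [eval_mul, eval_C]
    ring
  rw [this]
  exact D.mul_mem hr (hs c hc)

variable {T : Subring K} (hDT : D ≤ T)

/-- Richman's criterion: writing `x = a / b`, the ideal `(D :_D x)` contains the kernel of
`d ↦ a * d mod b`; flatness keeps this kernel exact after `T ⊗[D] -`, and the tensored map kills
`1 ⊗ 1` because `a = b * x` in `T`. -/
theorem map_condIdeal_C_eq_top_of_flat [IsFractionRing ↥D K] (hflat : SubringFlat D T hDT)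
    {x : K} (hx : x ∈ T) : Ideal.map (Subring.inclusion hDT) (condIdeal D (C x)) = ⊤ := by
  let _ : Algebra ↥D ↥T := (Subring.inclusion hDT).toAlgebra
  have : Module.Flat ↥D ↥T := hflat
  obtain ⟨a, b, hb, hab⟩ := IsFractionRing.div_surjective (A := ↥D) x
  have hb0 : (b : K) ≠ 0 := by simpa using nonZeroDivisors.ne_zero hb
  replace hab : (b : K) * x = a := by rw [← hab]; exact mul_div_cancel₀ _ hb0
  set φ : ↥D →ₗ[↥D] ↥D ⧸ Ideal.span {b} := (Ideal.span {b}).mkQ ∘ₗ LinearMap.mulLeft ↥D a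
  have hker : LinearMap.ker φ ≤ condIdeal D (C x) := by
    intro d hd
    obtain ⟨c, hc⟩ := Ideal.mem_span_singleton'.mp
      ((Submodule.Quotient.mk_eq_zero _).mp (LinearMap.mem_ker.mp hd))
    rw [LinearMap.mulLeft_apply] at hc
    rw [mem_condIdeal_C]
    have hc' : (c : K) * b = a * d := by exact_mod_cast hc
    have : (d : K) * x = c := mul_left_cancel₀ hb0 <| by linear_combination d * hab - hc'
    exact this ▸ c.2
  have h1 : (1 : ↥T) ⊗ₜ[↥D] (1 : ↥D) ∈ LinearMap.ker (φ.lTensor ↥T) := by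
    have hxT : a • (1 : ↥T) = b • ⟨x, hx⟩ := by
      rw [Algebra.smul_def, Algebra.smul_def, mul_one]
      exact Subtype.ext hab.symm
    have hb : b • (Submodule.Quotient.mk 1 : ↥D ⧸ Ideal.span {b}) = 0 := by
      rw [← Submodule.Quotient.mk_smul, smul_eq_mul, mul_one, Submodule.Quotient.mk_eq_zero]
      exact Ideal.mem_span_singleton_self b
    have hφ : φ 1 = a • Submodule.Quotient.mk 1 := by
      simp [φ, Algebra.smul_def]
    rw [LinearMap.mem_ker, LinearMap.lTensor_tmul, hφ, ← TensorProduct.smul_tmul, hxT,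
      TensorProduct.smul_tmul, hb, TensorProduct.tmul_zero]
  obtain ⟨ξ, hξ⟩ := (Module.Flat.lTensor_exact ↥T (LinearMap.exact_subtype_ker_map φ) _).mp h1
  have hrid : ∀ ζ, TensorProduct.rid ↥D ↥T ((LinearMap.ker φ).subtype.lTensor ↥T ζ) ∈
      Ideal.map (Subring.inclusion hDT) (condIdeal D (C x)) := by
    intro ζ
    induction ζ using TensorProduct.induction_on with
    | zero => simp
    | tmul u j =>
      rw [LinearMap.lTensor_tmul, TensorProduct.rid_tmul, Algebra.smul_def, mul_comm]
      exact Ideal.mul_mem_left _ u (Ideal.mem_map_of_mem _ (hker j.2))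
    | add ζ ζ' h h' => rw [map_add, map_add]; exact add_mem h h'
  rw [Ideal.eq_top_iff_one]
  simpa [hξ] using hrid ξ

theorem mem_intPoly_of_eval_mem_of_flat [IsFractionRing ↥D K] (hflat : SubringFlat D T hDT)
    {g : K[X]} (hg : ∀ c ∈ D, g.eval c ∈ T) : g ∈ intPoly T := by
  suffices ∀ m, ∀ g : K[X], g.natDegree ≤ m → (∀ c ∈ D, g.eval c ∈ T) → g ∈ intPoly T from
    this _ g le_rfl hg
  intro m
  induction m with
  | zero =>
    intro g hdeg hg x _
    rw [eq_C_of_natDegree_le_zero hdeg] at hg ⊢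
    simpa using hg 0 D.zero_mem
  | succ m ih =>
    intro g hdeg hg x hx
    -- `g (d * X) - d ^ (m + 1) * g` has degree `≤ m`, so evaluating it at `x` gives
    -- `d ^ (m + 1) * g x ∈ T` for every `d ∈ (D :_D x)`.
    have hrad : Ideal.map (Subring.inclusion hDT) (condIdeal D (C x)) ≤
        (condIdeal T (C (g.eval x))).radical := by
      rw [Ideal.map_le_iff_le_comap]
      intro d hd
      rw [mem_condIdeal_C] at hd
      refine ⟨m + 1, mem_condIdeal_C.mpr ?_⟩
      have hq := ih _ (natDegree_comp_C_mul_X_sub_le_s3 hdeg (d : K)) (fun c hc => ?_) x hx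
      · simp only [eval_sub, eval_comp, eval_mul, eval_C, eval_X] at hq
        simpa using T.sub_mem (hg _ hd) hq
      · simp only [eval_sub, eval_comp, eval_mul, eval_C, eval_X]
        exact T.sub_mem (hg _ (D.mul_mem d.2 hc)) (T.mul_mem (hDT (D.pow_mem d.2 _)) (hg c hc))
    rw [map_condIdeal_C_eq_top_of_flat hDT hflat hx, top_le_iff, Ideal.radical_eq_top] at hrad
    simpa using mem_condIdeal_C.mp (hrad ▸ Submodule.mem_top : (1 : ↥T) ∈ condIdeal T _)

theorem intMul_le_intPoly_of_flat [IsFractionRing ↥D K] (hflat : SubringFlat D T hDT) :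
    intMul D T ≤ intPoly T := by
  intro f hf
  rw [mem_intMul] at hf
  induction hf using Submodule.span_induction with
  | mem f hf => exact mem_intPoly_of_eval_mem_of_flat hDT hflat fun c hc => hDT (hf c hc)
  | zero => exact zero_mem _
  | add f g _ _ hf hg => exact add_mem hf hg
  | smul u f _ hf =>
    rw [smul_poly_eq_C_mul]
    exact mul_mem (fun _ _ => by simp) hf

lemma map_condIdeal_le_condIdealT (f : K[X]) :
    Ideal.map (Subring.inclusion hDT) (condIdeal D f) ≤ condIdealT D T f := by
  rw [Ideal.map_le_iff_le_comap]
  exact fun d hd c hc => hDT (hd c hc)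

lemma C_mul_mem_intMul_of_mem_map_condIdeal {f : K[X]} {u : ↥T}
    (hu : u ∈ Ideal.map (Subring.inclusion hDT) (condIdeal D f)) : C (u : K) * f ∈ intMul D T := by
  let Z : Ideal ↥T :=
    (Submodule.span ↥T (intPoly D : Set K[X])).comap (LinearMap.toSpanSingleton ↥T K[X] f)
  have hle : Ideal.map (Subring.inclusion hDT) (condIdeal D f) ≤ Z := by
    rw [Ideal.map_le_iff_le_comap]
    intro d hd
    rw [Ideal.mem_comap, Submodule.mem_comap, LinearMap.toSpanSingleton_apply,
      smul_poly_eq_C_mul]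
    exact Submodule.subset_span fun c hc => by simpa using hd c hc
  have := hle hu
  rwa [Submodule.mem_comap, LinearMap.toSpanSingleton_apply, smul_poly_eq_C_mul] at this

theorem map_condIdeal_eq_top_of_mem_intMul [IsFractionRing ↥D K] (hflat : SubringFlat D T hDT)
    {f : K[X]} (hf : f ∈ intMul D T) :
    Ideal.map (Subring.inclusion hDT) (condIdeal D f) = ⊤ := by
  rw [mem_intMul] at hf
  induction hf using Submodule.span_induction with
  | mem f hf => rw [condIdeal_eq_top_of_mem_intPoly hf, Ideal.map_top]
  | zero => rw [condIdeal_eq_top_of_mem_intPoly (zero_mem _), Ideal.map_top]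
  | add f g _ _ hf hg =>
    simpa [Ideal.map_mul, hf, hg] using
      Ideal.map_mono (f := Subring.inclusion hDT) (condIdeal_mul_le_condIdeal_add f g)
  | smul u f _ hf =>
    simpa [Ideal.map_mul, hf, map_condIdeal_C_eq_top_of_flat hDT hflat u.2,
      smul_poly_eq_C_mul] using
      Ideal.map_mono (f := Subring.inclusion hDT) (condIdeal_C_mul_le_condIdeal_C_mul (u : K) f)

theorem mem_map_condIdeal_of_C_mul_mem_intMul [IsFractionRing ↥D K]
    (hflat : SubringFlat D T hDT) {f : K[X]} {t : ↥T} (h : C (t : K) * f ∈ intMul D T) :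
    t ∈ Ideal.map (Subring.inclusion hDT) (condIdeal D f) := by
  set I := Ideal.map (Subring.inclusion hDT) (condIdeal D f)
  have hle : condIdeal D (C (t : K)) * condIdeal D (C (t : K) * f) ≤
      Ideal.comap (Subring.inclusion hDT) (I.colon {t}) := by
    refine Ideal.mul_le.mpr fun r hr s hs => ?_
    rw [mem_condIdeal_C] at hr
    rw [Ideal.mem_comap, Submodule.mem_colon_singleton, smul_eq_mul]
    have hrs : ((r * s : ↥D) : K) * t ∈ D := by
      simpa [mul_right_comm] using D.mul_mem hr s.2
    have hincl : Subring.inclusion hDT (r * s) * t = Subring.inclusion hDT ⟨_, hrs⟩ := rfl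
    rw [hincl]
    refine Ideal.mem_map_of_mem _ fun c hc => ?_
    have heval : ((r * s : ↥D) : K) * t * f.eval c = r * (s * (C (t : K) * f).eval c) := by
      push_cast
      rw [eval_mul, eval_C]
      ring
    exact heval ▸ D.mul_mem r.2 (hs c hc)
  have htop : Ideal.map (Subring.inclusion hDT)
      (condIdeal D (C (t : K)) * condIdeal D (C (t : K) * f)) = ⊤ := by
    rw [Ideal.map_mul, map_condIdeal_C_eq_top_of_flat hDT hflat t.2,
      map_condIdeal_eq_top_of_mem_intMul hDT hflat h, Ideal.top_mul]
  simpa using Ideal.map_le_iff_le_comap.mpr hle (htop ▸ Submodule.mem_top : (1 : ↥T) ∈ _)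

end IntegerValued

/-- Let `D` be an integral domain with quotient field `K` and let `T` be a flat
overring of `D`. Then `Int(D)T = Int(T)` if and only if, for every `f ∈ K[X]`,
`(D :_D f(D))T = (T :_T f(D)T)`. -/
theorem statement3 {K : Type*} [Field K] (D : Subring K) [IsFractionRing ↥D K]
    (T : Subring K) (hDT : D ≤ T) (hflat : SubringFlat D T hDT) :
    intMul D T = intPoly T ↔
      ∀ f : Polynomial K,
        Ideal.map (Subring.inclusion hDT) (condIdeal D f) = condIdealT D T f := by
  constructor
  · intro hInt f
    refine le_antisymm (map_condIdeal_le_condIdealT hDT f) fun t ht => ?_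
    refine mem_map_condIdeal_of_C_mul_mem_intMul hDT hflat (hInt ▸ ?_)
    exact mem_intPoly_of_eval_mem_of_flat hDT hflat fun c hc => by simpa using ht c hc
  · intro hcond
    refine le_antisymm (intMul_le_intPoly_of_flat hDT hflat) fun p hp => ?_
    have h1 : (1 : ↥T) ∈ condIdealT D T p := fun c hc => by simpa using hp c (hDT hc)
    simpa using C_mul_mem_intMul_of_mem_map_condIdeal hDT ((hcond p).ge h1)
end
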